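/- Let s = 1 and κ ∈ ℂ, and let σ, σ̃ : ℝ → ℂ be differentiable functions. Suppose R : ℝ → Matrix (Fin 3) (Fin 3) ℂ is differentiable, R(x) is unit lower triangular for every x, and R'(x) + R(x)·F(σ̃)(x) = F(σ)(x)·R(x) for all x ∈ ℝ. Then (σ − σ̃)'(x) = 0 for all x ∈ ℝ; consequently σ − σ̃ is a constant function. -/

import Mathlib

/-- The matrix F(σ) associated with the differential expression
ℓ_{σ,s,κ}(y) = y''' + s(σ'y)' + sσ'y' + κσ''y. -/
noncomputable def Fmat (s κ : ℂ) (σ : ℝ → ℂ) (x : ℝ) : Matrix (Fin 3) (Fin 3) ℂ :=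
  !![ -(s + κ) * σ x, 1, 0;
      -(3 * κ ^ 2 / 2 + s ^ 2 / 2 + 2 * κ * s) * σ x ^ 2, 2 * κ * σ x, 1;
      κ * (κ ^ 2 - s ^ 2) * σ x ^ 3,
        -(3 * κ ^ 2 / 2 + s ^ 2 / 2 - 2 * κ * s) * σ x ^ 2, (s - κ) * σ x ]

/-- A 3×3 matrix is unit lower triangular if its diagonal entries are 1 and the
entries above the diagonal are 0. -/
def UnitLowerTriangular (A : Matrix (Fin 3) (Fin 3) ℂ) : Prop :=
  (∀ i, A i i = 1) ∧ ∀ i j : Fin 3, i < j → A i j = 0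

/-! With `δ = σ - σ̃` and 0-based indices, the diagonal entries of `R' + R F(σ̃) = F(σ) R` force
`R₁₀ = (s + κ) δ` and `R₂₁ = (s - κ) δ`. The entries `(1,0)` and `(2,1)` then give two formulas for
`R₂₀`, namely `(s + κ) δ' + (s² - κ²) δ² / 2` and `-(s - κ) δ' + (s² - κ²) δ² / 2`, so
`R₁₀' + R₂₁' = 0`. Hence `2 s δ = R₁₀ + R₂₁` is differentiable with zero derivative. -/

theorem UnitLowerTriangular.eq_of {A : Matrix (Fin 3) (Fin 3) ℂ} (hA : UnitLowerTriangular A) :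
    A = !![1, 0, 0; A 1 0, 1, 0; A 2 0, A 2 1, 1] := by
  ext i j
  fin_cases i <;> fin_cases j <;> simp [hA.1, hA.2 _ _ (by decide : (0 : Fin 3) < 1),
    hA.2 _ _ (by decide : (0 : Fin 3) < 2), hA.2 _ _ (by decide : (1 : Fin 3) < 2)]

/-- `A'` plays the role of the derivative of `A`, whose diagonal is constant. -/
theorem entries_of_Fmat_gauge {s κ : ℂ} {σ σtil : ℝ → ℂ} {x : ℝ} {A A' : Matrix (Fin 3) (Fin 3) ℂ}
    (hA : UnitLowerTriangular A) (h00 : A' 0 0 = 0) (h11 : A' 1 1 = 0)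
    (h : A' + A * Fmat s κ σtil x = Fmat s κ σ x * A) :
    A 1 0 = (s + κ) * (σ x - σtil x) ∧ A 2 1 = (s - κ) * (σ x - σtil x) ∧
      A' 1 0 + A' 2 1 = 0 := by
  rw [hA.eq_of] at h
  have entry : ∀ i j, _ := fun i j => congrFun (congrFun h i) j
  have e00 := entry 0 0
  have e11 := entry 1 1
  have e10 := entry 1 0
  have e21 := entry 2 1
  simp only [Fmat, Matrix.add_apply, Matrix.mul_apply, Fin.sum_univ_three, Matrix.of_apply,
    Matrix.cons_val', Matrix.cons_val_zero, Matrix.cons_val_one, Matrix.cons_val_two,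
    Matrix.head_cons, Matrix.tail_cons, h00, h11] at e00 e11 e10 e21
  have hA10 : A 1 0 = (s + κ) * (σ x - σtil x) := by linear_combination -e00
  have hA21 : A 2 1 = (s - κ) * (σ x - σtil x) := by linear_combination -e11 - e00
  refine ⟨hA10, hA21, ?_⟩
  -- `e10` and `e21` are two expressions for `A 2 0`
  simp only [hA10, hA21] at e10 e21
  linear_combination e10 + e21

theorem hasDerivAt_sub_zero_of_Fmat_gauge {s κ : ℂ} (hs : s ≠ 0) {σ σtil : ℝ → ℂ}
    {R R' : ℝ → Matrix (Fin 3) (Fin 3) ℂ}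
    (hR : ∀ (x : ℝ) (i j : Fin 3), HasDerivAt (fun t => R t i j) (R' x i j) x)
    (hTri : ∀ x : ℝ, UnitLowerTriangular (R x))
    (heq : ∀ x : ℝ, R' x + R x * Fmat s κ σtil x = Fmat s κ σ x * R x) (x : ℝ) :
    HasDerivAt (fun t => σ t - σtil t) 0 x := by
  have hdiag : ∀ x i, R' x i i = 0 := fun x i =>
    (hR x i i).unique (by simpa only [(hTri _).1 i] using hasDerivAt_const x (1 : ℂ))
  have hentries x := entries_of_Fmat_gauge (hTri x) (hdiag x 0) (hdiag x 1) (heq x)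
  have hsub : (fun t => σ t - σtil t) = fun t => (R t 1 0 + R t 2 1) / (2 * s) := by
    funext t
    rw [(hentries t).1, (hentries t).2.1]
    field_simp
    ring
  rw [hsub]
  simpa [(hentries x).2.2] using ((hR x 1 0).add (hR x 2 1)).div_const (2 * s)

theorem sigma_diff_const_of_s_eq_one_general (s : ℂ) (hs : s = 1) (κ : ℂ) (σ σtil : ℝ → ℂ)
    (R R' : ℝ → Matrix (Fin 3) (Fin 3) ℂ)
    (hR : ∀ (x : ℝ) (i j : Fin 3), HasDerivAt (fun t => R t i j) (R' x i j) x)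
    (hTri : ∀ x : ℝ, UnitLowerTriangular (R x))
    (heq : ∀ x : ℝ, R' x + R x * Fmat s κ σtil x = Fmat s κ σ x * R x) :
    (∀ x : ℝ, deriv (fun t => σ t - σtil t) x = 0)
    ∧ ∃ c : ℂ, ∀ x : ℝ, σ x - σtil x = c := by
  have hderiv := hasDerivAt_sub_zero_of_Fmat_gauge (hs ▸ one_ne_zero) hR hTri heq
  have hzero x := (hderiv x).deriv
  exact ⟨hzero, σ 0 - σtil 0, fun x =>
    is_const_of_deriv_eq_zero (fun x => (hderiv x).differentiableAt) hzero x 0⟩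

/-- Key step of the uniqueness theorem for s = 1: if R is a differentiable unit
lower triangular matrix function satisfying R' + R·F(σ̃) = F(σ)·R with σ, σ̃
differentiable, then (σ − σ̃)' = 0, so σ − σ̃ is constant. -/
theorem sigma_diff_const_of_s_eq_one (s : ℂ) (hs : s = 1) (κ : ℂ) (σ σtil : ℝ → ℂ)
    (hσ : Differentiable ℝ σ) (hσtil : Differentiable ℝ σtil)
    (R R' : ℝ → Matrix (Fin 3) (Fin 3) ℂ)
    (hR : ∀ (x : ℝ) (i j : Fin 3), HasDerivAt (fun t => R t i j) (R' x i j) x)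
    (hTri : ∀ x : ℝ, UnitLowerTriangular (R x))
    (heq : ∀ x : ℝ, R' x + R x * Fmat s κ σtil x = Fmat s κ σ x * R x) :
    (∀ x : ℝ, deriv (fun t => σ t - σtil t) x = 0)
    ∧ ∃ c : ℂ, ∀ x : ℝ, σ x - σtil x = c :=
  sigma_diff_const_of_s_eq_one_general s hs κ σ σtil R R' hR hTri heq
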